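/- arXiv:1701.06936 — 7 statements merged into one kernel-verified Lean document; each statement's English description precedes it below -/
import Mathlib

section
/- Let R be a local ring whose Jacobson radical is right T-nilpotent (i.e. R is a local right perfect ring). Then every right R-module is regularly weakly based. -/
/-- A weak basis of a module: a weakly independent generating set. -/
def IsWeakBasis (R : Type*) [Semiring R] {M : Type*} [AddCommMonoid M]
    [Module R M] (X : Set M) : Prop :=
  (∀ x ∈ X, x ∉ Submodule.span R (X \ {x})) ∧ Submodule.span R X = ⊤

/-- A module is regularly weakly based if every generating set contains a weak basis. -/
def RegularlyWeaklyBased (R : Type*) [Semiring R] (M : Type*) [AddCommMonoid M]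
    [Module R M] : Prop :=
  ∀ X : Set M, Submodule.span R X = ⊤ → ∃ W ⊆ X, IsWeakBasis R W

/-- `tProd a n = a n * a (n-1) * ⋯ * a 1` (and `1` for `n = 0`). -/
def tProd {R : Type*} [Ring R] (a : ℕ → R) : ℕ → R
  | 0 => 1
  | n + 1 => a (n + 1) * tProd a n

/-- A set `S ⊆ R` is right T-nilpotent if for every sequence `a₁, a₂, …` of elements
of `S` there is `n ≥ 1` with `aₙ ⋯ a₂ a₁ = 0`. -/
def IsRightTNilpotent {R : Type*} [Ring R] (S : Set R) : Prop :=
  ∀ a : ℕ → R, (∀ n, 1 ≤ n → a n ∈ S) → ∃ n, 1 ≤ n ∧ tProd a n = 0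

/-!
Work modulo `MJ`, where `J` is the Jacobson radical. By Zorn's lemma a generating set `X`
contains a maximal subset `W` that is weakly independent modulo `MJ`. Since `R` is local,
an element `x ∈ X` outside `span W + MJ` can be adjoined to `W`: in a relation
`w = z + x r + t` either `r` is a unit, which puts `x` in `span W + MJ`, or `r ∈ J`, which puts
`w` in `span (W \ {w}) + MJ`. Hence `span W + MJ = M`, and right T-nilpotence of `J` makes `MJ`
superfluous in every right module (Bass's Nakayama lemma), so `W` is a weak basis.
-/

open MulOpposite Submodule
open scoped Pointwise

namespace IsLocalRing

variable {R : Type*} [Ring R] [IsLocalRing R]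

instance toIsDedekindFiniteMonoid : IsDedekindFiniteMonoid R where
  mul_eq_one_symm {a b} h := by
    have hidem : IsIdempotentElem (b * a) := by
      rw [IsIdempotentElem, mul_assoc, ← mul_assoc a, h, one_mul]
    rcases isUnit_or_isUnit_of_isUnit_add (a := b * a) (b := 1 - b * a)
      (by rw [add_sub_cancel]; exact isUnit_one) with hu | hu
    · exact (IsIdempotentElem.iff_eq_one_of_isUnit hu).mp hidem
    · have hb : b = 0 := hu.mul_right_eq_zero.mp (by
        rw [sub_mul, one_mul, mul_assoc, h, mul_one, sub_self])
      simp [hb] at h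

theorem mem_jacobson_bot_of_not_isUnit {x : R} (hx : ¬IsUnit x) :
    x ∈ (⊥ : TwoSidedIdeal R).jacobson := by
  rw [TwoSidedIdeal.mem_jacobson_iff]
  intro y
  have hyx : ¬IsUnit (y * x) := fun h => hx (isUnit_of_mul_isUnit_right h)
  obtain ⟨u, hu⟩ := (isUnit_or_isUnit_of_isUnit_add (a := y * x + 1) (b := -(y * x))
    (by rw [add_neg_cancel_comm]; exact isUnit_one)).resolve_right (by rwa [IsUnit.neg_iff])
  refine ⟨↑u⁻¹, ?_⟩
  rw [TwoSidedIdeal.mem_bot, mul_assoc, ← mul_add_one, ← hu, Units.inv_mul, sub_self]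

end IsLocalRing

theorem IsRightTNilpotent.zero_of_one_of_exists_mul {R : Type*} [Ring R] {S : Set R}
    (hS : IsRightTNilpotent S) {p : R → Prop} (h1 : p 1) (hmul : ∀ r, p r → ∃ a ∈ S, p (a * r)) :
    p 0 := by
  choose f hfS hfp using fun r : {r // p r} => hmul r r.2
  let seq : ℕ → {r // p r} := fun n => Nat.rec ⟨1, h1⟩ (fun _ r => ⟨f r * r, hfp r⟩) n
  have hseq : ∀ n, tProd (fun n => f (seq (n - 1))) n = (seq n).1 := by
    intro n
    induction n with
    | zero => rfl
    | succ n ih => simp only [tProd, Nat.add_sub_cancel, ih]; rfl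
  obtain ⟨n, -, hn⟩ := hS _ fun n _ => hfS (seq (n - 1))
  simpa [← hseq n, hn] using (seq n).2

theorem IsRightTNilpotent.eq_top_of_sup_smul_top_eq_top {R : Type*} [Ring R] {S : Set R}
    (hS : IsRightTNilpotent S) (hSR : ∀ a ∈ S, ∀ r, a * r ∈ S)
    {M : Type*} [AddCommGroup M] [Module Rᵐᵒᵖ M] {N : Submodule Rᵐᵒᵖ M}
    (h : N ⊔ (op '' S) • (⊤ : Submodule Rᵐᵒᵖ M) = ⊤) : N = ⊤ := by
  by_contra hN
  -- If `M r ⊄ N` then, as `M = N + MS`, also `M a r ⊄ N` for some `a ∈ S`; T-nilpotence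
  -- stops this descent at `r = 0`.
  suffices ∃ m : M, op (0 : R) • m ∉ N by simp at this
  refine hS.zero_of_one_of_exists_mul (p := fun r => ∃ m : M, op r • m ∉ N) ?_ ?_
  · obtain ⟨m, hm⟩ : ∃ m, m ∉ N := by simpa [Submodule.eq_top_iff'] using hN
    exact ⟨m, by rwa [op_one, one_smul]⟩
  rintro r ⟨m, hm⟩
  by_contra! hr
  let K : Submodule Rᵐᵒᵖ M :=
    { carrier := {t | ∀ b : R, op (b * r) • t ∈ N}
      add_mem' := fun hs ht b => by rw [smul_add]; exact N.add_mem (hs b) (ht b)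
      zero_mem' := fun b => by rw [smul_zero]; exact N.zero_mem
      smul_mem' := fun c t ht b => by
        rw [smul_smul, ← op_unop c, ← op_mul, ← mul_assoc]; exact ht _ }
  have hNK : N ≤ K := fun t ht b => N.smul_mem _ ht
  have hMSK : (op '' S) • (⊤ : Submodule Rᵐᵒᵖ M) ≤ K := by
    refine set_smul_le _ _ _ ?_
    rintro _ y ⟨a, ha, rfl⟩ - b
    rw [smul_smul, ← op_mul, ← mul_assoc]
    exact hr _ (hSR a ha b) y
  have hm' : m ∈ K := (h ▸ sup_le hNK hMSK : ⊤ ≤ K) mem_top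
  exact hm (by simpa using hm' 1)

section WeakIndependence

variable {A M : Type*} [Ring A] [AddCommGroup M] [Module A M]

def IsWeaklyIndependentMod (P : Submodule A M) (W : Set M) : Prop :=
  ∀ w ∈ W, w ∉ span A (W \ {w}) ⊔ P

variable {P : Submodule A M}

theorem isWeaklyIndependentMod_sUnion {c : Set (Set M)} (hc : IsChain (· ⊆ ·) c)
    (h : ∀ W ∈ c, IsWeaklyIndependentMod P W) : IsWeaklyIndependentMod P (⋃₀ c) := by
  rintro w ⟨W₁, hW₁, hw₁⟩ hw
  rw [← span_eq P, ← span_union] at hw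
  obtain ⟨F, hF, hwF⟩ := mem_span_finite_of_mem_span hw
  obtain ⟨W, hW, hFW⟩ := hc.directedOn.exists_mem_subset_of_finite_of_subset_sUnion ⟨W₁, hW₁⟩
    ((F.finite_toSet.sdiff (t := (P : Set M))).insert w)
    (Set.insert_subset ⟨W₁, hW₁, hw₁⟩ fun z hz => ((hF hz.1).resolve_right hz.2).1)
  refine h W hW w (hFW (Set.mem_insert w _)) ?_
  rw [← span_eq P, ← span_union]
  refine span_mono (fun z hz => ?_) hwF
  by_cases hzP : z ∈ (P : Set M)
  · exact Or.inr hzP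
  · exact Or.inl ⟨hFW (Set.mem_insert_of_mem _ ⟨hz, hzP⟩), ((hF hz).resolve_right hzP).2⟩

theorem IsWeaklyIndependentMod.insert {W : Set M} {x : M} (hW : IsWeaklyIndependentMod P W)
    (hP : ∀ a : A, ¬IsUnit a → ∀ y : M, a • y ∈ P) (hx : x ∉ span A W ⊔ P) :
    IsWeaklyIndependentMod P (insert x W) := by
  rintro w (rfl | hwW) hw
  · exact hx (sup_le_sup_right (span_mono (Set.sdiff_singleton_subset_iff.mpr le_rfl)) P hw)
  have hwx : w ≠ x := by rintro rfl; exact hx (mem_sup_left (subset_span hwW))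
  rw [Set.insert_sdiff_of_notMem W (Set.notMem_singleton_iff.mpr hwx.symm)] at hw
  obtain ⟨s, hs, t, ht, hst⟩ := mem_sup.mp hw
  obtain ⟨a, z, hz, rfl⟩ := mem_span_insert.mp hs
  by_cases ha : IsUnit a
  · refine hx ((smul_mem_iff_of_isUnit _ ha).mp ?_)
    rw [show a • x = w - z - t by rw [← hst]; abel]
    refine sub_mem (sub_mem (mem_sup_left (subset_span hwW)) ?_) (mem_sup_right ht)
    exact mem_sup_left (span_mono Set.sdiff_subset hz)
  · have hw' : z + (a • x + t) ∈ span A (W \ {w}) ⊔ P :=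
      add_mem (mem_sup_left hz) (mem_sup_right (add_mem (hP a ha x) ht))
    rw [add_left_comm, ← add_assoc, hst] at hw'
    exact hW w hwW hw'

theorem exists_isWeaklyIndependentMod_sup_eq_top (hP : ∀ a : A, ¬IsUnit a → ∀ y : M, a • y ∈ P)
    {X : Set M} (hX : span A X = ⊤) :
    ∃ W ⊆ X, IsWeaklyIndependentMod P W ∧ span A W ⊔ P = ⊤ := by
  obtain ⟨W, ⟨hWX, hW⟩, hWmax⟩ := zorn_subset {W | W ⊆ X ∧ IsWeaklyIndependentMod P W}
    fun c hcX hc => ⟨⋃₀ c, ⟨Set.sUnion_subset fun W hW => (hcX hW).1,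
      isWeaklyIndependentMod_sUnion hc fun W hW => (hcX hW).2⟩, fun _ => Set.subset_sUnion_of_mem⟩
  refine ⟨W, hWX, hW, ?_⟩
  rw [eq_top_iff, ← hX, span_le]
  intro x hxX
  by_contra hx
  have hxW := hWmax ⟨Set.insert_subset hxX hWX, hW.insert hP hx⟩ (Set.subset_insert x W)
    (Set.mem_insert x W)
  exact hx (mem_sup_left (subset_span hxW))

end WeakIndependence

/-- Every right module (i.e. `Rᵐᵒᵖ`-module) over a local right perfect ring (a local
ring whose Jacobson radical is right T-nilpotent) is regularly weakly based. -/
theorem regularlyWeaklyBased_of_isLocalRing_rightPerfect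
    (R : Type*) [Ring R] [IsLocalRing R]
    (hTnil : IsRightTNilpotent ((TwoSidedIdeal.jacobson (⊥ : TwoSidedIdeal R) : TwoSidedIdeal R) : Set R))
    (M : Type*) [AddCommGroup M] [Module Rᵐᵒᵖ M] :
    RegularlyWeaklyBased Rᵐᵒᵖ M := by
  intro X hX
  set J := TwoSidedIdeal.jacobson (⊥ : TwoSidedIdeal R)
  have hnonunit : ∀ a : Rᵐᵒᵖ, ¬IsUnit a → ∀ y : M, a • y ∈ (op '' (J : Set R)) • (⊤ : Submodule Rᵐᵒᵖ M) :=
    fun a ha y => mem_set_smul_of_mem_mem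
      ⟨a.unop, IsLocalRing.mem_jacobson_bot_of_not_isUnit (by rwa [isUnit_unop]), rfl⟩ mem_top
  obtain ⟨W, hWX, hW, hWtop⟩ := exists_isWeaklyIndependentMod_sup_eq_top hnonunit hX
  have hspan := hTnil.eq_top_of_sup_smul_top_eq_top (fun a ha r => J.mul_mem_right a r ha) hWtop
  exact ⟨W, hWX, fun w hw hw' => hW w hw (mem_sup_left hw'), hspan⟩
end

section
/- Let R be a ring, M a right R-module, and K a finitely generated submodule of M. Then M is regularly weakly based if and only if the factor module M/K is regularly weakly based. -/
open Submodule

/-- If a submodule contains the kernel of a surjection and maps onto everything, it is top. -/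
lemma span_top_of_ker_le {R M N : Type*} [Ring R] [AddCommGroup M] [AddCommGroup N]
    [Module R M] [Module R N] (f : M →ₗ[R] N) (p : Submodule R M)
    (hker : LinearMap.ker f ≤ p) (hmap : Submodule.map f p = ⊤) : p = ⊤ := by
  rw [eq_top_iff]
  intro m _
  have hm : f m ∈ Submodule.map f p := by rw [hmap]; trivial
  obtain ⟨s, hs, hfs⟩ := hm
  have h1 : m - s ∈ LinearMap.ker f := by
    simp [LinearMap.mem_ker, map_sub, hfs]
  have h2 := hker h1
  have := p.add_mem hs h2
  simpa using this

/-- Extract a minimal finite "extra part" of a spanning set. -/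
lemma exists_minimal_finset {R M : Type*} [Semiring R] [DecidableEq M] [AddCommMonoid M] [Module R M]
    (Y : Set M) (G : Finset M) (h : Submodule.span R (Y ∪ ↑G) = ⊤) :
    ∃ G' : Finset M, G' ⊆ G ∧ Submodule.span R (Y ∪ ↑G') = ⊤ ∧
      ∀ g ∈ G', Submodule.span R (Y ∪ ↑(G'.erase g)) ≠ ⊤ := by
  classical
  revert h
  induction G using Finset.strongInductionOn with
  | _ G ih =>
    intro h
    by_cases hex : ∃ g ∈ G, Submodule.span R (Y ∪ ↑(G.erase g)) = ⊤
    · obtain ⟨g, hg, hspan⟩ := hex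
      obtain ⟨G', h1, h2, h3⟩ := ih (G.erase g) (Finset.erase_ssubset hg) hspan
      exact ⟨G', h1.trans (Finset.erase_subset _ _), h2, h3⟩
    · push_neg at hex
      exact ⟨G, le_refl _, h, hex⟩

/-- A f.g. submodule below a span is below the span of a finite subset. -/
lemma fg_le_span_finset {R M : Type*} [Semiring R] [AddCommMonoid M] [Module R M]
    {K : Submodule R M} (hK : K.FG) {X : Set M} (hle : K ≤ Submodule.span R X) :
    ∃ F : Finset M, ↑F ⊆ X ∧ K ≤ Submodule.span R (F : Set M) := by
  classical
  obtain ⟨S, hS⟩ := hK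
  have hmem : ∀ s : {x // x ∈ S}, (s : M) ∈ Submodule.span R X :=
    fun s => hle (hS ▸ Submodule.subset_span s.2)
  choose T hT1 hT2 using fun s => Submodule.mem_span_finite_of_mem_span (hmem s)
  refine ⟨S.attach.biUnion T, ?_, ?_⟩
  · intro x hx
    simp only [Finset.coe_biUnion, Set.mem_iUnion, Finset.mem_coe] at hx
    obtain ⟨s, _, hxs⟩ := hx
    exact hT1 s hxs
  · rw [← hS]
    rw [Submodule.span_le]
    intro s hs
    exact Submodule.span_mono (by
      intro t ht
      simp only [Finset.coe_biUnion, Set.mem_iUnion, Finset.mem_coe]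
      exact ⟨⟨s, hs⟩, Finset.mem_attach _ _, ht⟩) (hT2 ⟨s, hs⟩)



lemma rwb_of_surjective {R M N : Type*} [Ring R] [AddCommGroup M] [AddCommGroup N]
    [Module R M] [Module R N] (f : M →ₗ[R] N) (hf : Function.Surjective f)
    (hker : (LinearMap.ker f).FG) (hM : RegularlyWeaklyBased R M) :
    RegularlyWeaklyBased R N := by
  classical
  intro Xb hXb
  set X : Set M := f ⁻¹' (insert 0 Xb) with hXdef
  have hkX : (LinearMap.ker f : Set M) ⊆ X := by
    intro k hk
    simp only [hXdef, Set.mem_preimage]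
    exact Set.mem_insert_iff.mpr (Or.inl (LinearMap.mem_ker.mp hk))
  have himg : f '' X = insert 0 Xb := Set.image_preimage_eq _ hf
  have hspanX : Submodule.span R X = ⊤ := by
    apply span_top_of_ker_le f
    · exact fun k hk => Submodule.subset_span (hkX hk)
    · rw [Submodule.map_span, himg, Submodule.span_insert_zero, hXb]
  obtain ⟨W, hWX, hWind, hWspan⟩ := hM X hspanX
  -- finite subset of W spanning the kernel
  obtain ⟨F, hFW, hFker⟩ := fg_le_span_finset hker (X := W) (by rw [hWspan]; exact le_top)
  set good : Set N := f '' (W \ ↑F) with hgood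
  -- key independence of good elements
  have key : ∀ w ∈ W \ (F : Set M), f w ∉ Submodule.span R (f '' (W \ {w})) := by
    rintro w ⟨hwW, hwF⟩ hmem
    rw [← Submodule.map_span] at hmem
    obtain ⟨u, hu, hfu⟩ := hmem
    have h1 : w - u ∈ LinearMap.ker f := by
      simp [LinearMap.mem_ker, map_sub, hfu]
    have h2 : w - u ∈ Submodule.span R (W \ {w}) := by
      refine Submodule.span_mono ?_ (hFker h1)
      intro t ht
      exact ⟨hFW ht, by rintro rfl; exact hwF ht⟩
    have h3 : w ∈ Submodule.span R (W \ {w}) := by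
      have := Submodule.add_mem _ hu h2
      simpa using this
    exact hWind w hwW h3
  set Fb : Finset N := F.image f with hFb
  have hspanGF : Submodule.span R (good ∪ ↑Fb) = ⊤ := by
    have h1 : good ∪ ↑Fb = f '' W := by
      rw [hFb, Finset.coe_image, hgood, ← Set.image_union, Set.diff_union_of_subset hFW]
    rw [h1, ← Submodule.map_span, hWspan, Submodule.map_top, LinearMap.range_eq_top.mpr hf]
  obtain ⟨G, hGF, hGspan, hGmin⟩ := exists_minimal_finset good Fb hspanGF
  -- basic facts
  have h0good : (0 : N) ∉ good := by
    rintro ⟨w, hw, hw0⟩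
    exact key w hw (hw0 ▸ Submodule.zero_mem _)
  have hsub_span : ∀ g ∈ G, g ∈ Submodule.span R (good ∪ ↑(G.erase g)) →
      Submodule.span R (good ∪ ↑(G.erase g)) = ⊤ := by
    intro g hg hmem
    rw [eq_top_iff, ← hGspan, Submodule.span_le]
    rintro t (ht | ht)
    · exact Submodule.subset_span (Or.inl ht)
    · rcases eq_or_ne t g with rfl | hne
      · exact hmem
      · exact Submodule.subset_span (Or.inr (Finset.mem_erase.mpr ⟨hne, ht⟩))
  have hGgood : ∀ g ∈ G, g ∉ good := by
    intro g hg hcon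
    exact hGmin g hg (hsub_span g hg (Submodule.subset_span (Or.inl hcon)))
  have h0G : (0 : N) ∉ G := by
    intro h0
    exact hGmin 0 h0 (hsub_span 0 h0 (Submodule.zero_mem _))
  have hXimg : ∀ t ∈ f '' X, t = 0 ∨ t ∈ Xb := by
    intro t ht
    rw [himg] at ht
    exact Set.mem_insert_iff.mp ht
  refine ⟨good ∪ ↑G, ?_, ?_, hGspan⟩
  · rintro t (ht | ht)
    · have h1 : t ∈ f '' X := by
        obtain ⟨w, hw, rfl⟩ := ht
        exact ⟨w, hWX hw.1, rfl⟩
      rcases hXimg t h1 with rfl | h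
      · exact absurd ht h0good
      · exact h
    · have h1 : t ∈ f '' X := by
        have h2 := hGF ht
        rw [hFb, Finset.mem_image] at h2
        obtain ⟨u, hu, rfl⟩ := h2
        exact ⟨u, hWX (hFW hu), rfl⟩
      rcases hXimg t h1 with rfl | h
      · exact absurd (Finset.mem_coe.mp ht) h0G
      · exact h
  · rintro z (hz | hz)
    · obtain ⟨w, hw, rfl⟩ := hz
      intro hmem
      refine key w hw (Submodule.span_mono ?_ hmem)
      rintro t ⟨(ht | ht), htne⟩
      · obtain ⟨w', hw', rfl⟩ := ht
        refine ⟨w', ⟨hw'.1, ?_⟩, rfl⟩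
        rintro rfl
        exact htne rfl
      · have := hGF ht
        rw [hFb, Finset.mem_image] at this
        obtain ⟨u, hu, rfl⟩ := this
        refine ⟨u, ⟨hFW hu, ?_⟩, rfl⟩
        rintro rfl
        exact hw.2 hu
    · intro hmem
      refine hGmin z hz (hsub_span z hz (Submodule.span_mono ?_ hmem))
      rintro t ⟨(ht | ht), htne⟩
      · exact Or.inl ht
      · exact Or.inr (Finset.mem_erase.mpr ⟨htne, ht⟩)

lemma exists_weak_basis_of_quotient {R M N : Type*} [Ring R] [AddCommGroup M] [AddCommGroup N]
    [Module R M] [Module R N] (f : M →ₗ[R] N) (hf : Function.Surjective f)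
    (X : Set M) (hX : Submodule.span R X = ⊤) (F : Finset M) (hFX : ↑F ⊆ X)
    (hFker : (F : Set M) ⊆ (LinearMap.ker f : Set M))
    (hkerF : LinearMap.ker f ≤ Submodule.span R (F : Set M))
    (hN : RegularlyWeaklyBased R N) : ∃ W ⊆ X, IsWeakBasis R W := by
  classical
  have hspanfX : Submodule.span R (f '' X) = ⊤ := by
    rw [← Submodule.map_span, hX, Submodule.map_top, LinearMap.range_eq_top.mpr hf]
  obtain ⟨V, hVX, hVind, hVspan⟩ := hN (f '' X) hspanfX
  have h0V : (0 : N) ∉ V := fun h0 => hVind 0 h0 (Submodule.zero_mem _)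
  have hch : ∀ v : {x // x ∈ V}, ∃ x, x ∈ X ∧ f x = (v : N) := fun v => by
    obtain ⟨x, hx, hfx⟩ := hVX v.2
    exact ⟨x, hx, hfx⟩
  choose y hyX hyf using hch
  set Y : Set M := Set.range y with hYdef
  have hfY : f '' Y = V := by
    rw [hYdef, ← Set.range_comp]
    have : (f ∘ y) = fun v : {x // x ∈ V} => (v : N) := funext fun v => hyf v
    rw [this, Subtype.range_coe]
  have hYker : ∀ a ∈ Y, a ∉ LinearMap.ker f := by
    rintro a ⟨v, rfl⟩ hkera
    have : (v : N) = 0 := by rw [← hyf v]; exact LinearMap.mem_ker.mp hkera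
    exact h0V (this ▸ v.2)
  have hspanYF : Submodule.span R (Y ∪ ↑F) = ⊤ := by
    apply span_top_of_ker_le f
    · exact le_trans hkerF (Submodule.span_mono Set.subset_union_right)
    · rw [Submodule.map_span, Set.image_union, hfY]
      rw [eq_top_iff, ← hVspan]
      exact Submodule.span_mono Set.subset_union_left
  obtain ⟨G, hGF, hGspan, hGmin⟩ := exists_minimal_finset Y F hspanYF
  have hGker : ∀ g ∈ G, g ∈ LinearMap.ker f := fun g hg => hFker (hGF hg)
  have hGY : ∀ g ∈ G, g ∉ Y := fun g hg hgY => hYker g hgY (hGker g hg)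
  have hsub_span : ∀ g ∈ G, g ∈ Submodule.span R (Y ∪ ↑(G.erase g)) →
      Submodule.span R (Y ∪ ↑(G.erase g)) = ⊤ := by
    intro g hg hmem
    rw [eq_top_iff, ← hGspan, Submodule.span_le]
    rintro t (ht | ht)
    · exact Submodule.subset_span (Or.inl ht)
    · rcases eq_or_ne t g with rfl | hne
      · exact hmem
      · exact Submodule.subset_span (Or.inr (Finset.mem_erase.mpr ⟨hne, ht⟩))
  refine ⟨Y ∪ ↑G, ?_, ?_, hGspan⟩
  · rintro t (ht | ht)
    · obtain ⟨v, rfl⟩ := ht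
      exact hyX v
    · exact hFX (hGF ht)
  · rintro z (hz | hz)
    · -- z = y v
      obtain ⟨v, rfl⟩ := hz
      intro hmem
      have hinj : ∀ u : {x // x ∈ V}, y u = y v → u = v := by
        intro u hu
        have : (u : N) = (v : N) := by rw [← hyf u, ← hyf v, hu]
        exact Subtype.ext this
      have hsubset : (Y ∪ ↑G) \ {y v} ⊆ (Y \ {y v}) ∪ ↑G := by
        rintro t ⟨(ht | ht), htne⟩
        · exact Or.inl ⟨ht, htne⟩
        · exact Or.inr ht
      have hmem2 : f (y v) ∈ Submodule.map f (Submodule.span R ((Y \ {y v}) ∪ ↑G)) :=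
        ⟨y v, Submodule.span_mono hsubset hmem, rfl⟩
      rw [Submodule.map_span, Set.image_union] at hmem2
      have himgsub : f '' (Y \ {y v}) ∪ f '' ↑G ⊆ insert 0 (V \ {(v : N)}) := by
        rintro t (⟨a, ⟨⟨u, rfl⟩, hane⟩, rfl⟩ | ⟨g, hg, rfl⟩)
        · refine Set.mem_insert_iff.mpr (Or.inr ⟨(hyf u) ▸ ((hyf u).symm ▸ u.2), ?_⟩)
          · rw [hyf u]
            intro huv
            have h1 : (u : N) = (v : N) := huv
            exact hane (Set.mem_singleton_iff.mpr (congrArg y (Subtype.ext h1)))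
        · exact Set.mem_insert_iff.mpr (Or.inl (LinearMap.mem_ker.mp (hGker g hg)))
      have hmem3 : (v : N) ∈ Submodule.span R (V \ {(v : N)}) := by
        have := Submodule.span_mono himgsub hmem2
        rw [Submodule.span_insert_zero] at this
        rwa [hyf v] at this
      exact hVind (v : N) v.2 hmem3
    · intro hmem
      refine hGmin z hz (hsub_span z hz (Submodule.span_mono ?_ hmem))
      rintro t ⟨(ht | ht), htne⟩
      · exact Or.inl ht
      · exact Or.inr (Finset.mem_erase.mpr ⟨htne, ht⟩)

/-- Let `R` be a ring, `M` a right `R`-module (i.e. an `Rᵐᵒᵖ`-module) and `K` a finitely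
generated submodule of `M`. Then `M` is regularly weakly based iff `M/K` is. -/
theorem regularlyWeaklyBased_iff_quotient_fg
    (R : Type*) [Ring R] (M : Type*) [AddCommGroup M] [Module Rᵐᵒᵖ M]
    (K : Submodule Rᵐᵒᵖ M) (hK : K.FG) :
    RegularlyWeaklyBased Rᵐᵒᵖ M ↔ RegularlyWeaklyBased Rᵐᵒᵖ (M ⧸ K) := by
  classical
  constructor
  · intro hM
    refine rwb_of_surjective K.mkQ (Submodule.mkQ_surjective K) ?_ hM
    rwa [Submodule.ker_mkQ]
  · intro hQ X hX
    obtain ⟨F, hFX, hKF⟩ := fg_le_span_finset hK (X := X) (by rw [hX]; exact le_top)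
    set L : Submodule Rᵐᵒᵖ M := Submodule.span Rᵐᵒᵖ (F : Set M) with hL
    have hKL : K ≤ L := hKF
    have hKLker : K ≤ LinearMap.ker L.mkQ := by rwa [Submodule.ker_mkQ]
    set g : (M ⧸ K) →ₗ[Rᵐᵒᵖ] (M ⧸ L) := K.liftQ L.mkQ hKLker with hg
    have hgsurj : Function.Surjective g := by
      have hcomp : g.comp K.mkQ = L.mkQ := Submodule.liftQ_mkQ K L.mkQ hKLker
      intro x
      obtain ⟨m, rfl⟩ := Submodule.mkQ_surjective L x
      exact ⟨K.mkQ m, by rw [← hcomp]; rfl⟩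
    have hgker : (LinearMap.ker g).FG := by
      rw [hg, Submodule.ker_liftQ, Submodule.ker_mkQ]
      exact Submodule.FG.map _ (Submodule.fg_span F.finite_toSet)
    have hQL : RegularlyWeaklyBased Rᵐᵒᵖ (M ⧸ L) := rwb_of_surjective g hgsurj hgker hQ
    refine exists_weak_basis_of_quotient L.mkQ (Submodule.mkQ_surjective L) X hX F hFX ?_ ?_ hQL
    · intro t ht
      have h1 : t ∈ L := Submodule.subset_span ht
      simpa [LinearMap.mem_ker, Submodule.Quotient.mk_eq_zero] using h1
    · rw [Submodule.ker_mkQ]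
end

section
/- Let R be a Dedekind domain and 𝔭 a non-zero prime ideal of R. Every bounded 𝔭-primary R-module is regularly weakly based. -/
/-- Nakayama for nilpotently-acting ideals: if `I ^ n` kills `M` and
`N ⊔ I • ⊤ = ⊤` then `N = ⊤`. -/
lemma nakayama_nilpotent {R : Type*} [CommRing R] {M : Type*} [AddCommGroup M] [Module R M]
    (I : Ideal R) (n : ℕ) (hI : ∀ a ∈ I ^ n, ∀ m : M, a • m = 0)
    (N : Submodule R M) (h : N ⊔ I • ⊤ = ⊤) : N = ⊤ := by
  have hbot : (I ^ n • ⊤ : Submodule R M) = ⊥ := by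
    rw [eq_bot_iff]
    exact Submodule.smul_le.mpr fun r hr m _ => by
      show r • m ∈ (⊥ : Submodule R M)
      rw [hI r hr m]; exact Submodule.zero_mem ⊥
  have key : ∀ k : ℕ, (⊤ : Submodule R M) ≤ N ⊔ I ^ k • ⊤ := by
    intro k
    induction k with
    | zero => simp
    | succ k ih =>
      refine le_trans ih ?_
      have : (I ^ k • ⊤ : Submodule R M) ≤ N ⊔ I ^ (k + 1) • ⊤ := by
        calc (I ^ k • ⊤ : Submodule R M) = I ^ k • (N ⊔ I • ⊤) := by rw [h]
          _ = I ^ k • N ⊔ I ^ k • (I • ⊤) := Submodule.smul_sup _ _ _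
          _ ≤ N ⊔ I ^ (k + 1) • ⊤ := by
              apply sup_le_sup
              · exact Submodule.smul_le.mpr fun r _ m hm => N.smul_mem r hm
              · rw [pow_succ, mul_smul]
      exact sup_le le_sup_left this
  have := key n
  rw [hbot, sup_bot_eq] at this
  exact top_le_iff.mp this

/-- Let `R` be a Dedekind domain and `𝔭` a non-zero prime ideal of `R`. Every bounded
`𝔭`-primary `R`-module (one with `𝔭 ^ n • M = 0` for some `n ≥ 1`) is regularly
weakly based. -/
theorem regularlyWeaklyBased_of_bounded_primary
    (R : Type*) [CommRing R] [IsDomain R] [IsDedekindDomain R]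
    (𝔭 : Ideal R) (h𝔭 : 𝔭.IsPrime) (h𝔭0 : 𝔭 ≠ ⊥)
    (M : Type*) [AddCommGroup M] [Module R M]
    (hprimary : ∀ m : M, ∃ k : ℕ, ∀ a ∈ 𝔭 ^ k, a • m = 0)
    (hbounded : ∃ n : ℕ, 1 ≤ n ∧ ∀ a ∈ 𝔭 ^ n, ∀ m : M, a • m = 0) :
    RegularlyWeaklyBased R M := by
  obtain ⟨n, -, hn⟩ := hbounded
  haveI : 𝔭.IsMaximal := Ideal.IsPrime.isMaximal h𝔭 h𝔭0
  letI : Field (R ⧸ 𝔭) := Ideal.Quotient.field 𝔭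
  haveI : IsScalarTower R (R ⧸ 𝔭) (M ⧸ (𝔭 • ⊤ : Submodule R M)) :=
    Module.IsTorsionBySet.isScalarTower (Module.isTorsionBySet_quotient_ideal_smul M 𝔭)
  set π : M →ₗ[R] (M ⧸ (𝔭 • ⊤ : Submodule R M)) := (𝔭 • ⊤ : Submodule R M).mkQ with hπ
  have hsur : Function.Surjective (algebraMap R (R ⧸ 𝔭)) := Ideal.Quotient.mk_surjective
  intro X hX
  -- the image of X spans N over k
  have hXN : Submodule.span (R ⧸ 𝔭) (π '' X) = ⊤ := by
    rw [← Submodule.restrictScalars_eq_top_iff (S := R),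
      Submodule.restrictScalars_span R (R ⧸ 𝔭) hsur, ← Submodule.map_span, hX,
      Submodule.map_top, Submodule.range_mkQ]
  obtain ⟨b, hbX, hbspan, hbli⟩ := exists_linearIndependent (R ⧸ 𝔭) (π '' X)
  rw [hXN] at hbspan
  -- choose preimages in X
  have hch : ∀ v : M ⧸ (𝔭 • ⊤ : Submodule R M), ∃ x : M, v ∈ b → x ∈ X ∧ π x = v := by
    intro v
    by_cases hv : v ∈ b
    · obtain ⟨x, hx, hπx⟩ := hbX hv
      exact ⟨x, fun _ => ⟨hx, hπx⟩⟩
    · exact ⟨0, fun h => absurd h hv⟩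
  choose g hg using hch
  refine ⟨g '' b, ?_, ?_, ?_⟩
  · rintro _ ⟨v, hv, rfl⟩
    exact (hg v hv).1
  · -- weak independence
    rintro _ ⟨v, hv, rfl⟩ hmem
    have hπmem : π (g v) ∈ Submodule.span R (π '' (g '' b \ {g v})) := by
      rw [← Submodule.map_span]
      exact Submodule.mem_map_of_mem hmem
    have hsub : π '' (g '' b \ {g v}) ⊆ b \ {v} := by
      rintro _ ⟨x, ⟨⟨v', hv', rfl⟩, hne⟩, rfl⟩
      have hv'mem := (hg v' hv').2
      rw [hv'mem]
      refine ⟨hv', ?_⟩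
      intro hveq
      apply hne
      simp only [Set.mem_singleton_iff] at hveq
      rw [hveq]
      rfl
    have hvmem : v ∈ Submodule.span (R ⧸ 𝔭) (b \ {v}) := by
      have h1 : π (g v) ∈ Submodule.span R (b \ {v} : Set (M ⧸ (𝔭 • ⊤ : Submodule R M))) :=
        Submodule.span_mono hsub hπmem
      rw [← Submodule.restrictScalars_span R (R ⧸ 𝔭) hsur] at h1
      have h2 : π (g v) ∈ Submodule.span (R ⧸ 𝔭) (b \ {v}) := h1
      rwa [(hg v hv).2] at h2
    -- contradict linear independence
    have himg : (Subtype.val : b → M ⧸ (𝔭 • ⊤ : Submodule R M)) '' {i : b | (i : M ⧸ (𝔭 • ⊤ : Submodule R M)) ≠ v} = b \ {v} := by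
      ext y
      constructor
      · rintro ⟨⟨y, hy⟩, hne, rfl⟩
        exact ⟨hy, hne⟩
      · rintro ⟨hy, hne⟩
        exact ⟨⟨y, hy⟩, hne, rfl⟩
    have := hbli.notMem_span_image (s := {i : b | (i : M ⧸ (𝔭 • ⊤ : Submodule R M)) ≠ v}) (x := ⟨v, hv⟩)
      (by simp)
    rw [himg] at this
    exact this hvmem
  · -- spanning, via Nakayama
    apply nakayama_nilpotent 𝔭 n hn
    rw [sup_comm, ← Submodule.map_mkQ_eq_top, Submodule.map_span]
    have himg2 : π '' (g '' b) = b := by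
      ext y
      constructor
      · rintro ⟨_, ⟨v, hv, rfl⟩, rfl⟩
        rw [(hg v hv).2]; exact hv
      · intro hy
        exact ⟨g y, ⟨y, hy, rfl⟩, (hg y hy).2⟩
    rw [hπ] at himg2
    rw [himg2, ← Submodule.restrictScalars_span R (R ⧸ 𝔭) hsur, hbspan]
    rfl
end

section
/- Let R be a Dedekind domain and N a torsion-free R-module. If N contains a free submodule F such that the quotient N/F is a bounded torsion module, then N is projective. -/
/-!
If a nonzero `r` kills `N ⧸ F`, then `n ↦ r • n` embeds `N` into the free module `F`, injectively
because `N` is torsion-free. Over a Dedekind domain every nonzero ideal is invertible, hence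
projective, and then Kaplansky's argument shows that every submodule `M` of a free module
`ι →₀ R` is projective: well-order `ι`, filter `M` by the pieces supported on the initial
segments `Iic i`, and split off the ideal of leading coefficients at `i` in each step, which
exhibits `M` as the direct sum of these ideals.
-/

open scoped nonZeroDivisors

theorem Ideal.projective_of_isDedekindDomain {R : Type*} [CommRing R] [IsDedekindDomain R]
    (J : Ideal R) : Module.Projective R J := by
  rcases eq_or_ne J ⊥ with rfl | hJ
  · infer_instance
  let K := FractionRing R
  have hunit : IsUnit ((J : FractionalIdeal R⁰ K) : Submodule R K) :=
    (Ne.isUnit (FractionalIdeal.coeIdeal_ne_zero.mpr hJ)).map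
      (FractionalIdeal.coeSubmoduleHom R⁰ K)
  have : Module.Projective R (Submodule.map (Algebra.linearMap R K) J) :=
    Submodule.projective_of_isUnit hunit
  exact .of_equiv
    (J.equivMapOfInjective (Algebra.linearMap R K) (IsFractionRing.injective R K)).symm

theorem Finset.max_lt_of_forall_le_of_notMem {ι : Type*} [LinearOrder ι] {s : Finset ι} {i : ι}
    (hs : ∀ j ∈ s, j ≤ i) (hi : i ∉ s) : s.max < i :=
  Finset.sup_lt_iff (WithBot.bot_lt_coe i) |>.mpr fun j hj =>
    WithBot.coe_lt_coe.mpr ((hs j hj).lt_of_ne fun h => hi (h ▸ hj))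

noncomputable section

namespace Submodule

variable {R ι : Type*} [CommRing R] [LinearOrder ι] (M : Submodule R (ι →₀ R))

def supportedIic (i : ι) : Submodule R (ι →₀ R) :=
  M ⊓ Finsupp.supported R R (Set.Iic i)

def leadingCoeff (i : ι) : M.supportedIic i →ₗ[R] R :=
  (Finsupp.lapply i).comp (M.supportedIic i).subtype

variable {M}

theorem mem_supportedIic {i : ι} {m : ι →₀ R} :
    m ∈ M.supportedIic i ↔ m ∈ M ∧ ∀ j ∈ m.support, j ≤ i := by
  simp [supportedIic, Finsupp.mem_supported, Set.subset_def]

theorem apply_eq_zero_of_mem_supportedIic {i j : ι} {m : ι →₀ R} (hm : m ∈ M.supportedIic i)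
    (hij : i < j) : m j = 0 :=
  Finsupp.notMem_support_iff.mp fun hj => (mem_supportedIic.mp hm).2 j hj |>.not_gt hij

variable (s : ∀ i, LinearMap.range (M.leadingCoeff i) →ₗ[R] M.supportedIic i)

def sumSections : (Π₀ i, LinearMap.range (M.leadingCoeff i)) →ₗ[R] M :=
  DFinsupp.lsum ℕ fun i => (inclusion inf_le_left).comp (s i)

theorem coe_sumSections_single (i : ι) (y : LinearMap.range (M.leadingCoeff i)) :
    (sumSections s (DFinsupp.single i y) : ι →₀ R) = s i y := by
  rw [sumSections, DFinsupp.lsum_single]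
  rfl

variable {s} (hs : ∀ i y, M.leadingCoeff i (s i y) = y)
include hs

theorem sumSections_apply_of_forall_le (x : Π₀ i, LinearMap.range (M.leadingCoeff i)) {i : ι}
    (hx : ∀ j, i < j → x j = 0) : (sumSections s x : ι →₀ R) i = x i := by
  classical
  rw [sumSections, DFinsupp.lsum_apply_apply, DFinsupp.sumAddHom_apply, DFinsupp.sum, coe_sum,
    Finsupp.finsetSum_apply, Finset.sum_eq_single i]
  · exact hs i (x i)
  · intro j hj hji
    have hji' : j < i :=
      (not_lt.mp fun hij => DFinsupp.mem_support_iff.mp hj (hx j hij)).lt_of_ne hji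
    exact apply_eq_zero_of_mem_supportedIic (s j (x j)).2 hji'
  · intro hi
    rw [DFinsupp.notMem_support_iff.mp hi, map_zero, ZeroMemClass.coe_zero, Finsupp.zero_apply]

theorem sumSections_injective : Function.Injective (sumSections s) := by
  classical
  refine (injective_iff_map_eq_zero _).mpr fun x hx => ?_
  by_contra hx0
  have hne : x.support.Nonempty :=
    Finset.nonempty_iff_ne_empty.mpr (mt DFinsupp.support_eq_empty.mp hx0)
  set i := x.support.max' hne
  have hmax := sumSections_apply_of_forall_le hs x (i := i) fun j hij =>
    DFinsupp.notMem_support_iff.mp fun hj => (x.support.le_max' j hj).not_gt hij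
  rw [hx] at hmax
  exact DFinsupp.mem_support_iff.mp (x.support.max'_mem hne) (Subtype.ext hmax.symm)

theorem sumSections_surjective [WellFoundedLT ι] : Function.Surjective (sumSections s) := by
  suffices h : ∀ (b : WithBot ι) (m : ι →₀ R), m ∈ M → m.support.max = b →
      ∃ x, (sumSections s x : ι →₀ R) = m from
    fun m => (h _ m m.2 rfl).imp fun x hx => Subtype.ext hx
  intro b
  induction b using WellFoundedLT.induction with
  | _ b ih =>
  intro m hm hb
  rcases eq_or_ne m 0 with rfl | hm0
  · exact ⟨0, by simp⟩
  obtain ⟨i, hi⟩ := Finset.max_of_nonempty (Finsupp.support_nonempty_iff.mpr hm0)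
  have hmi : m ∈ M.supportedIic i :=
    mem_supportedIic.mpr ⟨hm, fun j hj => Finset.le_max_of_eq hj hi⟩
  set a := (M.leadingCoeff i).rangeRestrict ⟨m, hmi⟩
  have hrest : m - s i a ∈ M.supportedIic i := sub_mem hmi (s i a).2
  have hlt : (m - s i a).support.max < b := by
    rw [← hb, hi]
    refine Finset.max_lt_of_forall_le_of_notMem (mem_supportedIic.mp hrest).2 ?_
    rw [Finsupp.notMem_support_iff, Finsupp.sub_apply]
    exact sub_eq_zero.mpr (hs i a).symm
  obtain ⟨x, hx⟩ := ih _ hlt _ (mem_supportedIic.mp hrest).1 rfl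
  refine ⟨x + DFinsupp.single i a, ?_⟩
  rw [map_add, coe_add, hx, coe_sumSections_single, sub_add_cancel]

end Submodule

end

theorem Submodule.projective_of_forall_ideal_projective {R ι : Type*} [CommRing R]
    (h : ∀ J : Ideal R, Module.Projective R J)
    (M : Submodule R (ι →₀ R)) : Module.Projective R M := by
  let : LinearOrder ι := IsWellOrder.linearOrder WellOrderingRel
  have : WellFoundedLT ι := ⟨WellOrderingRel.isWellOrder.wf⟩
  have : ∀ i, Module.Projective R (LinearMap.range (M.leadingCoeff i)) := fun _ => h _
  have hsection : ∀ i, ∃ s : LinearMap.range (M.leadingCoeff i) →ₗ[R] M.supportedIic i,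
      (M.leadingCoeff i).rangeRestrict ∘ₗ s = LinearMap.id := fun i =>
    Module.projective_lifting_property _ _ (LinearMap.surjective_rangeRestrict _)
  choose s hs using hsection
  have hs' : ∀ i y, M.leadingCoeff i (s i y) = y := fun i y =>
    congrArg Subtype.val (LinearMap.congr_fun (hs i) y)
  exact .of_equiv (.ofBijective (sumSections s)
    ⟨sumSections_injective hs', sumSections_surjective hs'⟩)

theorem Module.Projective.of_injective_to_free {R N P : Type*} [CommRing R] [IsDedekindDomain R]
    [AddCommGroup N] [Module R N] [AddCommGroup P] [Module R P] [Module.Free R P]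
    (f : N →ₗ[R] P) (hf : Function.Injective f) : Module.Projective R N := by
  let g := (Module.Free.chooseBasis R P).repr.toLinearMap ∘ₗ f
  have := Submodule.projective_of_forall_ideal_projective Ideal.projective_of_isDedekindDomain
    (LinearMap.range g)
  exact .of_equiv (LinearEquiv.ofInjective g ((LinearEquiv.injective _).comp hf)).symm

theorem projective_of_extension_of_free_by_bounded_torsion_general
    (R : Type*) [CommRing R] [IsDedekindDomain R]
    (N : Type*) [AddCommGroup N] [Module R N]
    (htf : ∀ (r : R) (n : N), r • n = 0 → r = 0 ∨ n = 0)
    (F : Submodule R N) (hF : Module.Free R F)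
    (hbdd : ∃ I : Ideal R, I ≠ ⊥ ∧ ∀ a ∈ I, ∀ x : N ⧸ F, a • x = 0) :
    Module.Projective R N := by
  obtain ⟨I, hI, hIN⟩ := hbdd
  obtain ⟨r, hrI, hr0⟩ := Submodule.exists_mem_ne_zero_of_ne_bot hI
  have hrF : ∀ n : N, r • n ∈ F := fun n =>
    (Submodule.Quotient.mk_eq_zero F).mp (hIN r hrI (Submodule.Quotient.mk n))
  exact Module.Projective.of_injective_to_free (LinearMap.codRestrict F (r • LinearMap.id) hrF)
    ((injective_iff_map_eq_zero _).mpr fun n hn =>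
      (htf r n (by simpa using congrArg Subtype.val hn)).resolve_left hr0)

/-- Let `R` be a Dedekind domain and `N` a torsion-free `R`-module. If `N` contains a
free submodule `F` such that `N/F` is a bounded torsion module, then `N` is projective. -/
theorem projective_of_extension_of_free_by_bounded_torsion
    (R : Type*) [CommRing R] [IsDomain R] [IsDedekindDomain R]
    (N : Type*) [AddCommGroup N] [Module R N]
    (htf : ∀ (r : R) (n : N), r • n = 0 → r = 0 ∨ n = 0)
    (F : Submodule R N) (hF : Module.Free R F)
    (htor : ∀ x : N ⧸ F, ∃ r : R, r ≠ 0 ∧ r • x = 0)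
    (hbdd : ∃ I : Ideal R, I ≠ ⊥ ∧ ∀ a ∈ I, ∀ x : N ⧸ F, a • x = 0) :
    Module.Projective R N :=
  projective_of_extension_of_free_by_bounded_torsion_general R N htf F hF hbdd
end

section
/- Let R be a Dedekind domain, 𝔭 a non-zero prime ideal of R, F a finitely generated R-module, and B a bounded 𝔭-primary R-module. Then F ⊕ B is regularly weakly based. -/
theorem greedy_shrink {R M : Type*} [Semiring R] [AddCommMonoid M] [Module R M] :
    ∀ (t : Finset M) (W₁ : Set M),
      Submodule.span R (↑t ∪ W₁) = ⊤ →
      (∀ y ∈ W₁, Submodule.span R ((↑t ∪ W₁) \ {y}) ≠ ⊤) →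
      ∃ W ⊆ ↑t ∪ W₁, Submodule.span R W = ⊤ ∧
        ∀ x ∈ W, Submodule.span R (W \ {x}) ≠ ⊤ := by
  classical
  intro t
  induction t using Finset.strongInductionOn with
  | _ t ih =>
    intro W₁ hgen hW₁
    by_cases h : ∃ x ∈ t, Submodule.span R ((↑t ∪ W₁) \ {x}) = ⊤
    · obtain ⟨x, hxt, hx⟩ := h
      have hxW₁ : x ∉ W₁ := fun hxW => hW₁ x hxW hx
      have hset : (↑(t.erase x) ∪ W₁ : Set M) = (↑t ∪ W₁) \ {x} := by
        rw [Finset.coe_erase, Set.union_diff_distrib,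
          Set.diff_singleton_eq_self hxW₁]
      obtain ⟨W, hWsub, hWgen, hWmin⟩ :=
        ih (t.erase x) (Finset.erase_ssubset hxt) W₁
          (by rw [hset]; exact hx)
          (by
            intro y hy hcon
            refine hW₁ y hy (top_unique ?_)
            rw [← hcon]
            refine Submodule.span_mono ?_
            rw [hset]
            exact Set.diff_subset_diff_left Set.diff_subset)
      refine ⟨W, ?_, hWgen, hWmin⟩
      refine hWsub.trans ?_
      rw [hset]; exact Set.diff_subset
    · push_neg at h
      refine ⟨↑t ∪ W₁, le_refl _, hgen, ?_⟩
      intro x hx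
      rcases hx with hx | hx
      · exact h x hx
      · exact hW₁ x hx

theorem regularlyWeaklyBased_fg_prod_bounded_primary'
    (R : Type*) [CommRing R] [IsDomain R] [IsDedekindDomain R]
    (𝔭 : Ideal R) (h𝔭 : 𝔭.IsPrime) (h𝔭0 : 𝔭 ≠ ⊥)
    (F : Type*) [AddCommGroup F] [Module R F] [Module.Finite R F]
    (B : Type*) [AddCommGroup B] [Module R B]
    (hprimary : ∀ b : B, ∃ k : ℕ, ∀ a ∈ 𝔭 ^ k, a • b = 0)
    (hbounded : ∃ n : ℕ, 1 ≤ n ∧ ∀ a ∈ 𝔭 ^ n, ∀ b : B, a • b = 0) :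
    ∀ X : Set (F × B), Submodule.span R X = ⊤ →
      ∃ W ⊆ X, Submodule.span R W = ⊤ ∧ ∀ x ∈ W, Submodule.span R (W \ {x}) ≠ ⊤ := by
  classical
  obtain ⟨n, hn1, hn⟩ := hbounded
  haveI : 𝔭.IsMaximal := h𝔭.isMaximal h𝔭0
  letI : Field (R ⧸ 𝔭) := Ideal.Quotient.field 𝔭
  intro X hX
  set π : F × B →ₗ[R] F := LinearMap.fst R F B with hπdef
  have hπsurj : Function.Surjective π := fun f => ⟨(f, 0), rfl⟩
  -- Step A : finite X₀ ⊆ X with span (π '' X₀) = ⊤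
  have hπX : Submodule.span R (π '' X) = ⊤ := by
    rw [← Submodule.map_span, hX, Submodule.map_top, LinearMap.range_eq_top.2 hπsurj]
  have hstepA : ∃ X₀ ⊆ X, X₀.Finite ∧ Submodule.span R (π '' X₀) = ⊤ := by
    refine (Set.exists_subset_image_finite_and (f := ⇑π) (s := X)
      (p := fun t => Submodule.span R t = ⊤)).mp ?_
    obtain ⟨t, ht⟩ := Module.finite_def.mp (inferInstance : Module.Finite R F)
    have key : ∀ y : F, ∃ u : Finset F, ↑u ⊆ π '' X ∧ y ∈ Submodule.span R (u : Set F) := by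
      intro y
      exact Submodule.mem_span_finite_of_mem_span (by rw [hπX]; trivial)
    choose u hu1 hu2 using key
    refine ⟨⋃ y ∈ t, ↑(u y), ?_, ?_, ?_⟩
    · exact Set.iUnion₂_subset fun y _ => hu1 y
    · exact t.finite_toSet.biUnion fun y _ => (u y).finite_toSet
    · rw [eq_top_iff, ← ht]
      rw [Submodule.span_le]
      intro y hy
      exact Submodule.span_mono (Set.subset_iUnion₂ (s := fun y _ => ((u y : Set F))) y hy) (hu2 y)
  obtain ⟨X₀, hX₀X, hX₀fin, hX₀span⟩ := hstepA
  -- Step B : the quotient V and generation criterion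
  set q : F × B →ₗ[R] (F × B) ⧸ (𝔭 • ⊤ : Submodule R (F × B)) :=
    (𝔭 • ⊤ : Submodule R (F × B)).mkQ with hqdef
  have spanRk : ∀ s : Set ((F × B) ⧸ (𝔭 • ⊤ : Submodule R (F × B))),
      Submodule.span R s = ⊤ ↔ Submodule.span (R ⧸ 𝔭) s = ⊤ := by
    intro s
    rw [← Submodule.restrictScalars_span R (R ⧸ 𝔭) Ideal.Quotient.mk_surjective,
      Submodule.restrictScalars_eq_top_iff]
  have gen : ∀ W : Set (F × B), Submodule.span R (π '' W) = ⊤ →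
      Submodule.span R (q '' W) = ⊤ → Submodule.span R W = ⊤ := by
    intro W hπW hqW
    have h1 : Submodule.span R W ⊔ 𝔭 • ⊤ = ⊤ := by
      have : Submodule.map q (Submodule.span R W) = ⊤ := by
        rw [Submodule.map_span, hqW]
      have h2 := congrArg (Submodule.comap q) this
      rwa [Submodule.comap_map_mkQ, Submodule.comap_top, sup_comm] at h2
    have h2 : ∀ k : ℕ, Submodule.span R W ⊔ 𝔭 ^ k • ⊤ = ⊤ := by
      intro k
      induction k with
      | zero => simp [Ideal.one_eq_top, Submodule.top_smul]
      | succ k ihk =>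
        rw [eq_top_iff]
        conv_lhs => rw [← ihk]
        refine sup_le le_sup_left ?_
        calc (𝔭 ^ k • ⊤ : Submodule R (F × B))
            = 𝔭 ^ k • (Submodule.span R W ⊔ 𝔭 • ⊤) := by rw [h1]
          _ = 𝔭 ^ k • Submodule.span R W ⊔ 𝔭 ^ k • (𝔭 • ⊤) := Submodule.smul_sup _ _ _
          _ ≤ Submodule.span R W ⊔ 𝔭 ^ (k + 1) • ⊤ := by
              refine sup_le_sup Submodule.smul_le_right (le_of_eq ?_)
              rw [← Submodule.smul_assoc, smul_eq_mul, ← pow_succ]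
    have h3 : (𝔭 ^ n • ⊤ : Submodule R (F × B)) ≤ Submodule.span R W := by
      refine Submodule.smul_le.2 ?_
      intro a ha m _
      obtain ⟨w, hw, hwπ⟩ : ∃ w ∈ Submodule.span R W, π w = m.1 := by
        have : m.1 ∈ Submodule.map π (Submodule.span R W) := by
          rw [Submodule.map_span, hπW]; trivial
        simpa using this
      have : a • m = a • w := by
        have h1 : π w = w.1 := rfl
        refine Prod.ext ?_ ?_
        · show a • m.1 = a • w.1
          rw [← hwπ, h1]
        · show a • m.2 = a • w.2
          rw [hn a ha, hn a ha]
      rw [this]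
      exact Submodule.smul_mem _ a hw
    have := h2 n
    rwa [sup_eq_left.2 h3] at this
  -- Step C : vector space arguments
  have hqX : Submodule.span (R ⧸ 𝔭) (q '' X) = ⊤ := by
    rw [← spanRk, ← Submodule.map_span, hX, Submodule.map_top, Submodule.range_mkQ]
  set N : Submodule (R ⧸ 𝔭) ((F × B) ⧸ (𝔭 • ⊤ : Submodule R (F × B))) :=
    Submodule.span (R ⧸ 𝔭) (q '' X₀) with hNdef
  set p := N.mkQ with hpdef
  have hpqX : Submodule.span (R ⧸ 𝔭) (p '' (q '' X)) = ⊤ := by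
    rw [← Submodule.map_span, hqX, Submodule.map_top, Submodule.range_mkQ]
  obtain ⟨b, hbsub, hbspan, hbind⟩ := exists_linearIndependent (R ⧸ 𝔭) (p '' (q '' X))
  rw [hpqX] at hbspan
  have hc : ∀ v, v ∈ b → ∃ x, x ∈ X ∧ p (q x) = v := by
    intro v hv
    obtain ⟨y, ⟨x, hx, hxy⟩, hyv⟩ := hbsub hv
    exact ⟨x, hx, by rw [hxy, hyv]⟩
  choose c hcX hcpq using hc
  set W₁ : Set (F × B) := Set.range (fun v : b => c v.1 v.2) with hW₁def
  have hW₁X : W₁ ⊆ X := by rintro _ ⟨v, rfl⟩; exact hcX v.1 v.2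
  -- generation of X₀ ∪ W₁
  have hπW₂ : Submodule.span R (π '' (X₀ ∪ W₁)) = ⊤ :=
    top_unique (hX₀span ▸ Submodule.span_mono (Set.image_mono Set.subset_union_left))
  have hqW₂ : Submodule.span R (q '' (X₀ ∪ W₁)) = ⊤ := by
    rw [spanRk]
    have hNS : N ≤ Submodule.span (R ⧸ 𝔭) (q '' (X₀ ∪ W₁)) :=
      Submodule.span_mono (Set.image_mono Set.subset_union_left)
    have hmap : Submodule.map p (Submodule.span (R ⧸ 𝔭) (q '' (X₀ ∪ W₁))) = ⊤ := by
      refine top_unique ?_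
      rw [← hbspan, Submodule.map_span]
      refine Submodule.span_mono ?_
      intro v hv
      refine ⟨q (c v hv), ?_, hcpq v hv⟩
      exact Set.mem_image_of_mem q (Or.inr ⟨⟨v, hv⟩, rfl⟩)
    have h := congrArg (Submodule.comap p) hmap
    rwa [Submodule.comap_map_eq, Submodule.comap_top, Submodule.ker_mkQ,
      sup_eq_left.2 hNS] at h
  have hgenW₂ : Submodule.span R (X₀ ∪ W₁) = ⊤ := gen _ hπW₂ hqW₂
  -- non-removability of elements of W₁
  have hW₁min : ∀ y ∈ W₁, Submodule.span R ((X₀ ∪ W₁) \ {y}) ≠ ⊤ := by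
    rintro _ ⟨v, rfl⟩ hcon
    have h1 : Submodule.span (R ⧸ 𝔭) (p '' (q '' ((X₀ ∪ W₁) \ {c v.1 v.2}))) = ⊤ := by
      have h0 : Submodule.span R (q '' ((X₀ ∪ W₁) \ {c v.1 v.2})) = ⊤ := by
        rw [← Submodule.map_span, hcon, Submodule.map_top, Submodule.range_mkQ]
      rw [spanRk] at h0
      rw [← Submodule.map_span, h0, Submodule.map_top, Submodule.range_mkQ]
    have h2 : p '' (q '' ((X₀ ∪ W₁) \ {c v.1 v.2})) ⊆ insert 0 (b \ {v.1}) := by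
      rintro _ ⟨_, ⟨m, ⟨hm1, hm2⟩, rfl⟩, rfl⟩
      rcases hm1 with hm1 | hm1
      · exact Or.inl ((Submodule.Quotient.mk_eq_zero N).2
          (Submodule.subset_span ⟨m, hm1, rfl⟩))
      · obtain ⟨u, rfl⟩ := hm1
        refine Or.inr ⟨by rw [hcpq u.1 u.2]; exact u.2, ?_⟩
        rw [hcpq u.1 u.2]
        intro huv
        refine hm2 ?_
        have : u = ⟨v.1, v.2⟩ := Subtype.ext huv
        rw [this]
        rfl
    have h4 : (v.1 : _) ∈ Submodule.span (R ⧸ 𝔭) (b \ {v.1}) := by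
      have h3 : (⊤ : Submodule (R ⧸ 𝔭) _) ≤ Submodule.span (R ⧸ 𝔭) (b \ {v.1}) := by
        rw [← Submodule.span_insert_zero (s := b \ {v.1}), ← h1]
        exact Submodule.span_mono h2
      exact h3 trivial
    have h5 := linearIndependent_iff_notMem_span.mp hbind v
    refine h5 ?_
    have himg : (Subtype.val '' (Set.univ \ {v} : Set b)) = b \ {v.1} := by
      rw [Set.image_diff Subtype.val_injective, Set.image_singleton,
        Subtype.coe_image_univ]
    rw [himg]
    exact h4
  -- greedy shrinking of the finite part
  obtain ⟨W, hWsub, hWgen, hWmin⟩ := greedy_shrink hX₀fin.toFinset W₁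
    (by rw [hX₀fin.coe_toFinset]; exact hgenW₂)
    (by rw [hX₀fin.coe_toFinset]; exact hW₁min)
  rw [hX₀fin.coe_toFinset] at hWsub
  exact ⟨W, hWsub.trans (Set.union_subset hX₀X hW₁X), hWgen, hWmin⟩

/-- Let `R` be a Dedekind domain, `𝔭` a non-zero prime ideal, `F` a finitely generated
`R`-module and `B` a bounded `𝔭`-primary `R`-module. Then `F ⊕ B` is regularly
weakly based. -/
theorem regularlyWeaklyBased_fg_prod_bounded_primary
    (R : Type*) [CommRing R] [IsDomain R] [IsDedekindDomain R]
    (𝔭 : Ideal R) (h𝔭 : 𝔭.IsPrime) (h𝔭0 : 𝔭 ≠ ⊥)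
    (F : Type*) [AddCommGroup F] [Module R F] [Module.Finite R F]
    (B : Type*) [AddCommGroup B] [Module R B]
    (hprimary : ∀ b : B, ∃ k : ℕ, ∀ a ∈ 𝔭 ^ k, a • b = 0)
    (hbounded : ∃ n : ℕ, 1 ≤ n ∧ ∀ a ∈ 𝔭 ^ n, ∀ b : B, a • b = 0) :
    RegularlyWeaklyBased R (F × B) := by
  intro X hX
  obtain ⟨W, hWX, hWgen, hWmin⟩ :=
    regularlyWeaklyBased_fg_prod_bounded_primary' R 𝔭 h𝔭 h𝔭0 F B hprimary hbounded X hX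
  refine ⟨W, hWX, fun x hx hmem => hWmin x hx ?_, hWgen⟩
  refine top_unique ?_
  rw [← hWgen]
  refine Submodule.span_le.2 ?_
  intro w hw
  by_cases hwx : w = x
  · rw [hwx]; exact hmem
  · exact Submodule.subset_span ⟨hw, hwx⟩
end

section
/- Let R be a Dedekind domain, let (𝔭_n | n ∈ ℕ) be a sequence of pairwise distinct non-zero prime ideals of R, and for each n let C_n be a non-zero cyclic 𝔭_n-primary R-module. Then the direct sum ⊕_{n ∈ ℕ} C_n is not regularly weakly based. -/
/-- Let `R` be a Dedekind domain, `(𝔭ₙ)` a sequence of pairwise distinct non-zero prime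
ideals, and for each `n` let `Cₙ` be a non-zero cyclic `𝔭ₙ`-primary `R`-module. Then
`⨁ₙ Cₙ` is not regularly weakly based. -/
theorem not_regularlyWeaklyBased_directSum_cyclic_primary
    (R : Type*) [CommRing R] [IsDomain R] [IsDedekindDomain R]
    (𝔭 : ℕ → Ideal R) (hprime : ∀ n, (𝔭 n).IsPrime) (hne0 : ∀ n, 𝔭 n ≠ ⊥)
    (hdist : Function.Injective 𝔭)
    (C : ℕ → Type*) [∀ n, AddCommGroup (C n)] [∀ n, Module R (C n)]
    (hnz : ∀ n, ∃ x : C n, x ≠ 0)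
    (hcyc : ∀ n, ∃ x : C n, Submodule.span R {x} = ⊤)
    (hprimary : ∀ n, ∀ x : C n, ∃ k : ℕ, ∀ a ∈ 𝔭 n ^ k, a • x = 0) :
    ¬ RegularlyWeaklyBased R (DirectSum ℕ C) := by
  classical
  intro hreg
  choose g hg using hcyc
  choose k hk using fun n => hprimary n (g n)
  have hgne : ∀ n, g n ≠ 0 := by
    intro n h0
    obtain ⟨y, hy⟩ := hnz n
    have hy' : y ∈ (⊤ : Submodule R (C n)) := trivial
    rw [← hg n, h0, Submodule.span_zero_singleton, Submodule.mem_bot] at hy'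
    exact hy hy'
  have hmax : ∀ n, (𝔭 n).IsMaximal := fun n => Ideal.IsPrime.isMaximal (hprime n) (hne0 n)
  have hcop : ∀ n m, n ≠ m → IsCoprime (𝔭 n ^ k n) (𝔭 m ^ k m) := fun n m h =>
    (Ideal.isCoprime_iff_sup_eq.mpr
      (Ideal.IsMaximal.coprime_of_ne (hmax n) (hmax m) (fun e => h (hdist e)))).pow
  let x : ℕ → DirectSum ℕ C :=
    fun n => ∑ i ∈ Finset.range (n+1), DirectSum.lof R ℕ C i (g i)
  have hxdef : ∀ n, x n = ∑ i ∈ Finset.range (n+1), DirectSum.lof R ℕ C i (g i) :=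
    fun n => rfl
  -- component computations
  have hcompA : ∀ n j, n < j → DirectSum.component R ℕ C j (x n) = 0 := by
    intro n j hnj
    rw [hxdef, map_sum]
    refine Finset.sum_eq_zero fun i hi => ?_
    rw [DirectSum.component.of, dif_neg]
    simp only [Finset.mem_range] at hi
    omega
  have hcompB : ∀ n, DirectSum.component R ℕ C n (x n) = g n := by
    intro n
    cases n with
    | zero => rw [hxdef]; simp
    | succ n =>
      rw [hxdef, Finset.sum_range_succ, map_add, DirectSum.component.lof_self,
        ← hxdef, hcompA n (n+1) (by omega), zero_add]
  -- the chain step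
  have hstep : ∀ n, ∃ a : R, a • x (n+1) = x n := by
    intro n
    have hc : IsCoprime (𝔭 (n+1) ^ k (n+1)) (∏ i ∈ Finset.range (n+1), 𝔭 i ^ k i) :=
      IsCoprime.prod_right fun i hi =>
        hcop (n+1) i (by simp only [Finset.mem_range] at hi; omega)
    obtain ⟨a, ha, b, hb, hab⟩ := Ideal.isCoprime_iff_exists.mp hc
    refine ⟨a, ?_⟩
    have hag : ∀ i ≤ n, a • g i = g i := by
      intro i hi
      have hbmem : b ∈ 𝔭 i ^ k i :=
        (Ideal.prod_le_inf.trans (Finset.inf_le (Finset.mem_range.mpr (Nat.lt_succ_of_le hi)))) hb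
      have h0 : b • g i = 0 := hk i b hbmem
      have hae : a = 1 - b := by linear_combination hab
      rw [hae, sub_smul, one_smul, h0, sub_zero]
    have h1 : a • DirectSum.lof R ℕ C (n+1) (g (n+1)) = 0 := by
      rw [← map_smul, hk (n+1) a ha, map_zero]
    rw [hxdef (n+1), hxdef n, Finset.smul_sum,
      Finset.sum_range_succ (fun i => a • DirectSum.lof R ℕ C i (g i)) (n+1)]
    rw [h1, add_zero]
    exact Finset.sum_congr rfl fun i hi => by
      rw [← map_smul, hag i (Nat.lt_succ_iff.mp (Finset.mem_range.mp hi))]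
  have hchain : ∀ n m, n ≤ m → x n ∈ Submodule.span R {x m} := by
    intro n m h
    induction m, h using Nat.le_induction with
    | base => exact Submodule.mem_span_singleton_self _
    | succ m hm ih =>
      obtain ⟨a, ha⟩ := hstep m
      have hx : x m ∈ Submodule.span R {x (m+1)} :=
        Submodule.mem_span_singleton.mpr ⟨a, ha⟩
      exact Submodule.span_le.mpr (Set.singleton_subset_iff.mpr hx) ih
  -- generation
  have hofg : ∀ i, DirectSum.lof R ℕ C i (g i) ∈ Submodule.span R (Set.range x) := by
    intro i
    cases i with
    | zero =>
      have h0 : x 0 = DirectSum.lof R ℕ C 0 (g 0) := by rw [hxdef]; simp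
      exact h0 ▸ Submodule.subset_span ⟨0, rfl⟩
    | succ i =>
      have h0 : DirectSum.lof R ℕ C (i+1) (g (i+1)) = x (i+1) - x i := by
        rw [hxdef (i+1), Finset.sum_range_succ, ← hxdef i]
        abel
      rw [h0]
      exact sub_mem (Submodule.subset_span ⟨i+1, rfl⟩) (Submodule.subset_span ⟨i, rfl⟩)
  have hgen : Submodule.span R (Set.range x) = ⊤ := by
    rw [eq_top_iff]
    rintro z -
    induction z using DirectSum.induction_on with
    | zero => exact zero_mem _
    | of i c =>
      have hc : c ∈ Submodule.span R {g i} := by rw [hg i]; trivial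
      obtain ⟨r, hr⟩ := Submodule.mem_span_singleton.mp hc
      have h0 : DirectSum.of C i c = r • DirectSum.lof R ℕ C i (g i) := by
        rw [← map_smul, hr, DirectSum.lof_eq_of]
      rw [h0]
      exact Submodule.smul_mem _ r (hofg i)
    | add a b ha hb => exact add_mem ha hb
  -- the main argument
  obtain ⟨W, hWX, hWind, hWspan⟩ := hreg (Set.range x) hgen
  have hub : ∀ N, ∃ n, N ≤ n ∧ x n ∈ W := by
    intro N
    by_contra hcon
    push_neg at hcon
    have hker : Submodule.span R W ≤ LinearMap.ker (DirectSum.component R ℕ C N) := by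
      rw [Submodule.span_le]
      intro w hw
      obtain ⟨n, rfl⟩ := hWX hw
      have hn : n < N := by
        by_contra h
        exact hcon n (le_of_not_gt h) hw
      simpa [LinearMap.mem_ker] using hcompA n N hn
    have hmem : DirectSum.lof R ℕ C N (g N) ∈ Submodule.span R W := by
      rw [hWspan]; trivial
    have := hker hmem
    rw [LinearMap.mem_ker, DirectSum.component.lof_self] at this
    exact hgne N this
  obtain ⟨n₀, -, hn₀⟩ := hub 0
  obtain ⟨m, hm, hmW⟩ := hub (n₀+1)
  have hne : x m ≠ x n₀ := by
    intro h
    have h1 := hcompB m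
    rw [h, hcompA n₀ m (by omega)] at h1
    exact hgne m h1.symm
  have hfin : x n₀ ∈ Submodule.span R (W \ {x n₀}) := by
    have hsub : ({x m} : Set (DirectSum ℕ C)) ⊆ W \ {x n₀} := by
      intro y hy
      rw [Set.mem_singleton_iff] at hy
      subst hy
      exact ⟨hmW, hne⟩
    exact Submodule.span_mono hsub (hchain n₀ m (by omega))
  exact hWind (x n₀) hn₀ hfin
end

section
/- Let R be a commutative von Neumann regular ring and let (S_n | n ∈ ℕ) be a sequence of simple submodules of R whose sum is direct. Then the R-module ⊕_{n ∈ ℕ} S_n is not regularly weakly based. In particular, if the socle of a commutative von Neumann regular ring R is not finitely generated, then it is not regularly weakly based, so the class of regularly weakly based modules is not closed under submodules. -/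
/-- The socle of a ring `R`: the sum of all simple submodules of the `R`-module `R`. -/
def ringSocle (R : Type*) [CommRing R] : Submodule R R :=
  sSup {S : Submodule R R | IsSimpleModule R S}

section Aux

variable {R : Type*} [CommRing R]

/-- In a commutative von Neumann regular ring, any atom-like submodule is
generated by a nonzero idempotent. -/
lemma exists_idem_gen (hvnr : ∀ a : R, ∃ x : R, a = a * x * a)
    (S : Submodule R R) (hbot : S ≠ ⊥)
    (hatom : ∀ B : Submodule R R, B ≤ S → B = ⊥ ∨ B = S) :
    ∃ e : R, e ≠ 0 ∧ e * e = e ∧ Submodule.span R {e} = S := by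
  obtain ⟨a, haS, ha0⟩ := (Submodule.ne_bot_iff S).mp hbot
  obtain ⟨x, hx⟩ := hvnr a
  have heS : a * x ∈ S := by rw [mul_comm]; exact S.smul_mem x haS
  have hea : a * x * a = a := hx.symm
  have he0 : a * x ≠ 0 := fun h => ha0 (by rw [← hea, h, zero_mul])
  have heid : a * x * (a * x) = a * x := by
    rw [show a * x * (a * x) = a * x * a * x by ring, hea]
  have hle : Submodule.span R {a * x} ≤ S := by
    rw [Submodule.span_le, Set.singleton_subset_iff]; exact heS
  rcases hatom _ hle with h | h
  · exact absurd (Submodule.span_eq_bot.mp h (a * x) rfl) he0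
  · exact ⟨a * x, he0, heid, h⟩

/-- The main engine: if a submodule `C` of `R` is generated by a sequence of
pairwise-orthogonal nonzero idempotents `e n` together with a submodule `D`
annihilating all the `e n`, then `↥C` is not regularly weakly based. -/
lemma main_not_rwb (C : Submodule R R) (e : ℕ → R)
    (heC : ∀ n, e n ∈ C) (hne : ∀ n, e n ≠ 0)
    (horth : ∀ m n, e m * e n = if m = n then e m else 0)
    (D : Submodule R R) (hDC : D ≤ C) (hD0 : ∀ d ∈ D, ∀ n, d * e n = 0)
    (hgen : C ≤ (⨆ n, Submodule.span R {e n}) ⊔ D) :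
    ¬ RegularlyWeaklyBased R ↥C := by
  intro hR
  set f : ℕ → R := fun n => ∑ k ∈ Finset.range (n + 1), e k with hf
  have hfC : ∀ n, f n ∈ C := fun n => Submodule.sum_mem _ fun k _ => heC k
  have hef : ∀ k n, k ≤ n → e k * f n = e k := by
    intro k n hk
    rw [hf]
    simp only [Finset.mul_sum]
    rw [Finset.sum_eq_single k]
    · rw [horth]; simp
    · intro b _ hb; rw [horth]; simp [Ne.symm hb]
    · intro h; exact absurd (Finset.mem_range.mpr (by omega)) h
  have hef0 : ∀ k n, n < k → e k * f n = 0 := by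
    intro k n hk
    rw [hf, Finset.mul_sum]
    apply Finset.sum_eq_zero
    intro b hb
    have hb' := Finset.mem_range.mp hb
    rw [horth]
    have : k ≠ b := by omega
    simp [this]
  have hff : ∀ a b, a ≤ b → f a * f b = f a := by
    intro a b hab
    rw [show f a * f b = ∑ k ∈ Finset.range (a + 1), e k * f b by
      rw [hf]; exact Finset.sum_mul _ _ _]
    refine Finset.sum_congr rfl fun k hk => ?_
    exact hef k b (le_trans (Nat.lt_succ_iff.mp (Finset.mem_range.mp hk)) hab)
  set x : ℕ → ↥C := fun n => ⟨f n, hfC n⟩ with hxdef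
  set X : Set ↥C := Set.range x ∪ {c : ↥C | (c : R) ∈ D} with hX
  have hXspan : Submodule.span R X = ⊤ := by
    apply Submodule.map_injective_of_injective C.injective_subtype
    rw [Submodule.map_span, Submodule.map_top, Submodule.range_subtype]
    apply le_antisymm
    · rw [Submodule.span_le]
      rintro y ⟨c, _, rfl⟩
      exact c.2
    · refine hgen.trans (sup_le ?_ ?_)
      · refine iSup_le fun n => ?_
        rw [Submodule.span_le, Set.singleton_subset_iff]
        have hfn : f n ∈ C.subtype '' X := ⟨x n, Or.inl ⟨n, rfl⟩, rfl⟩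
        have h1 : e n = e n • f n := by
          rw [smul_eq_mul]; exact (hef n n le_rfl).symm
        rw [h1]
        exact Submodule.smul_mem _ _ (Submodule.subset_span hfn)
      · intro d hd
        exact Submodule.subset_span ⟨⟨d, hDC hd⟩, Or.inr hd, rfl⟩
  obtain ⟨W, hWX, hWind, hWspan⟩ := hR X hXspan
  have hfne : ∀ a b : ℕ, a < b → x a ≠ x b := by
    intro a b hab h
    have hval : f a = f b := congrArg Subtype.val h
    have : e b * f a = e b * f b := by rw [hval]
    rw [hef0 b a hab, hef b b le_rfl] at this
    exact hne b this.symm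
  have key : ∀ a b : ℕ, a < b → x b ∈ W → x a ∈ Submodule.span R (W \ {x a}) := by
    intro a b hab hbW
    have hmem : x b ∈ W \ {x a} := by
      refine ⟨hbW, ?_⟩
      simp only [Set.mem_singleton_iff]
      exact fun h => hfne a b hab h.symm
    have hxa : x a = f a • x b := by
      apply Subtype.ext
      show f a = f a • f b
      rw [smul_eq_mul, hff a b hab.le]
    have hsm : f a • x b ∈ Submodule.span R (W \ {x a}) :=
      Submodule.smul_mem _ _ (Submodule.subset_span hmem)
    rwa [← hxa] at hsm
  have huniq : ∀ a b : ℕ, x a ∈ W → x b ∈ W → a = b := by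
    intro a b haW hbW
    rcases lt_trichotomy a b with h | h | h
    · exact absurd (key a b h hbW) (hWind (x a) haW)
    · exact h
    · exact absurd (key b a h haW) (hWind (x b) hbW)
  obtain ⟨N, hN⟩ : ∃ N, ∀ n, x n ∈ W → n ≤ N := by
    by_cases hex : ∃ n, x n ∈ W
    · obtain ⟨N, hNW⟩ := hex
      exact ⟨N, fun n hn => le_of_eq (huniq n N hn hNW)⟩
    · exact ⟨0, fun n hn => absurd ⟨n, hn⟩ hex⟩
  set m := N + 1 with hm
  set φ : ↥C →ₗ[R] R := (LinearMap.mulRight R (e m)).comp C.subtype with hφ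
  have hφW : ∀ w ∈ W, φ w = 0 := by
    intro w hw
    rcases hWX hw with ⟨n, rfl⟩ | hwD
    · show f n * e m = 0
      rw [mul_comm]
      exact hef0 m n (by have := hN n hw; omega)
    · exact hD0 _ hwD m
  have hker : Submodule.span R W ≤ LinearMap.ker φ := by
    rw [Submodule.span_le]
    intro w hw
    exact LinearMap.mem_ker.mpr (hφW w hw)
  have hmem : (⟨e m, heC m⟩ : ↥C) ∈ Submodule.span R W := hWspan ▸ Submodule.mem_top
  have h0 : φ ⟨e m, heC m⟩ = 0 := hker hmem
  have h1 : e m * e m = 0 := h0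
  rw [horth] at h1
  simp only [if_pos rfl] at h1
  exact hne m h1

end Aux

/-- Let `R` be a commutative von Neumann regular ring. If `(Sₙ)` is a sequence of simple
submodules of `R` whose sum is direct, then the module `⊕ₙ Sₙ` (the submodule `⨆ₙ Sₙ`)
is not regularly weakly based. In particular, if the socle of `R` is not finitely
generated then it is not regularly weakly based (while `R` itself, being finitely
generated, is), so the class of regularly weakly based modules is not closed under
submodules. -/
theorem not_regularlyWeaklyBased_of_directSum_simples
    (R : Type*) [CommRing R] (hvnr : ∀ a : R, ∃ x : R, a = a * x * a) :
    (∀ S : ℕ → Submodule R R, (∀ n, IsSimpleModule R (S n)) → iSupIndep S →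
      ¬ RegularlyWeaklyBased R ↥(⨆ n, S n)) ∧
    (¬ (ringSocle R).FG → ¬ RegularlyWeaklyBased R ↥(ringSocle R)) := by
  constructor
  · -- Part 1: direct sum of a sequence of simple submodules
    intro S hS hind
    have hatom : ∀ n, IsAtom (S n) := fun n => isSimpleModule_iff_isAtom.mp (hS n)
    choose e he0 heid hespan using fun n =>
      exists_idem_gen hvnr (S n) (hatom n).1 (fun B hB => (hatom n).le_iff.mp hB)
    have heS : ∀ n, e n ∈ S n := fun n =>
      (hespan n) ▸ Submodule.mem_span_singleton_self (e n)
    have horth : ∀ m n, e m * e n = if m = n then e m else 0 := by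
      intro m n
      by_cases h : m = n
      · subst h; simpa using heid m
      · have hdisj : Disjoint (S m) (S n) := hind.pairwiseDisjoint h
        have h1 : e m * e n ∈ S m := by
          rw [mul_comm]; exact (S m).smul_mem (e n) (heS m)
        have h2 : e m * e n ∈ S n := (S n).smul_mem (e m) (heS n)
        simp only [if_neg h]
        exact Submodule.disjoint_def.mp hdisj _ h1 h2
    refine main_not_rwb (⨆ n, S n) e (fun n => le_iSup S n (heS n)) he0 horth
      ⊥ bot_le (fun d hd n => ?_) ?_
    · rw [Submodule.mem_bot] at hd; rw [hd, zero_mul]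
    · rw [sup_bot_eq]
      exact le_of_eq (iSup_congr fun n => (hespan n).symm)
  · -- Part 2: the socle, when not finitely generated
    intro hfg
    have hss : ∀ S ∈ {S : Submodule R R | IsSimpleModule R ↥S},
        IsSemisimpleModule R ↥S := by
      intro S hS
      haveI : IsSimpleModule R ↥S := hS
      infer_instance
    have hsemi : IsSemisimpleModule R ↥(ringSocle R) := by
      rw [ringSocle, sSup_eq_iSup]
      exact isSemisimpleModule_biSup_of_isSemisimpleModule_submodule hss
    set C := ringSocle R with hC
    obtain ⟨s, hsind, hssup, hssimple⟩ :=
      IsSemisimpleModule.exists_sSupIndep_sSup_simples_eq_top R ↥C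
    have hsatom : ∀ T ∈ s, IsAtom T := fun T hT =>
      isSimpleModule_iff_isAtom.mp (hssimple T hT)
    have hsinf : s.Infinite := by
      intro hsfin
      apply hfg
      rw [← Submodule.fg_top, ← hssup, ← Set.Finite.coe_toFinset hsfin,
        ← Finset.sup_id_eq_sSup]
      refine Submodule.fg_finset_sup _ _ fun T hT => ?_
      have hTs : T ∈ s := (Set.Finite.mem_toFinset hsfin).mp hT
      obtain ⟨a, haT, ha0⟩ := (Submodule.ne_bot_iff T).mp (hsatom T hTs).1
      have hle : Submodule.span R {a} ≤ T := by
        rw [Submodule.span_le, Set.singleton_subset_iff]; exact haT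
      rcases (hsatom T hTs).le_iff.mp hle with h | h
      · exact absurd (Submodule.span_eq_bot.mp h a rfl) ha0
      · exact h ▸ ⟨{a}, by simp⟩
    set g := hsinf.natEmbedding with hg
    set S' : ℕ → Submodule R ↥C := fun n => (g n : Submodule R ↥C) with hS'
    have hS'atom : ∀ n, IsAtom (S' n) := fun n => hsatom _ (g n).2
    have hS'disj : ∀ {m n : ℕ}, m ≠ n → Disjoint (S' m) (S' n) := by
      intro m n hmn
      exact hsind.pairwiseDisjoint (g m).2 (g n).2
        (fun h => hmn (g.injective (Subtype.ext h)))
    obtain ⟨D', hcompl⟩ := exists_isCompl (⨆ n, S' n)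
    set T : ℕ → Submodule R R := fun n => Submodule.map C.subtype (S' n) with hT
    set D : Submodule R R := Submodule.map C.subtype D' with hD
    -- each `T n` is atom-like in `Submodule R R`
    have hTbot : ∀ n, T n ≠ ⊥ := by
      intro n h
      obtain ⟨a, haS, ha0⟩ := (Submodule.ne_bot_iff (S' n)).mp (hS'atom n).1
      have : (a : R) ∈ T n := ⟨a, haS, rfl⟩
      rw [h, Submodule.mem_bot] at this
      exact ha0 (Subtype.ext this)
    have hTle : ∀ n, T n ≤ C := fun n => Submodule.map_subtype_le C (S' n)
    have hTatom : ∀ n, ∀ B : Submodule R R, B ≤ T n → B = ⊥ ∨ B = T n := by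
      intro n B hB
      have hBC : B ≤ C := hB.trans (hTle n)
      have hBmap : Submodule.map C.subtype (Submodule.comap C.subtype B) = B := by
        rw [Submodule.map_comap_subtype]
        exact inf_eq_right.mpr hBC
      have hcle : Submodule.comap C.subtype B ≤ S' n := by
        have := Submodule.comap_mono (f := C.subtype) hB
        rwa [Submodule.comap_map_eq_of_injective C.injective_subtype] at this
      rcases (hS'atom n).le_iff.mp hcle with h | h
      · left; rw [← hBmap, h, Submodule.map_bot]
      · right; rw [← hBmap, h]
    choose e he0 heid hespan using fun n =>
      exists_idem_gen hvnr (T n) (hTbot n) (hTatom n)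
    have heT : ∀ n, e n ∈ T n := fun n =>
      (hespan n) ▸ Submodule.mem_span_singleton_self (e n)
    have horth : ∀ m n, e m * e n = if m = n then e m else 0 := by
      intro m n
      by_cases h : m = n
      · subst h; simpa using heid m
      · have hTdisj : T m ⊓ T n = ⊥ := by
          rw [hT]
          rw [← Submodule.map_inf _ C.injective_subtype,
            Disjoint.eq_bot (hS'disj h), Submodule.map_bot]
        have h1 : e m * e n ∈ T m := by
          rw [mul_comm]; exact (T m).smul_mem (e n) (heT m)
        have h2 : e m * e n ∈ T n := (T n).smul_mem (e m) (heT n)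
        simp only [if_neg h]
        have : e m * e n ∈ T m ⊓ T n := ⟨h1, h2⟩
        rwa [hTdisj, Submodule.mem_bot] at this
    refine main_not_rwb C e (fun n => hTle n (heT n)) he0 horth
      D (Submodule.map_subtype_le C D') (fun d hd n => ?_) ?_
    · have h1 : d * e n ∈ D := by
        rw [mul_comm]; exact D.smul_mem (e n) hd
      have h2 : d * e n ∈ T n := (T n).smul_mem d (heT n)
      have hDT : D ⊓ T n = ⊥ := by
        rw [hD, hT, ← Submodule.map_inf _ C.injective_subtype]
        have : D' ⊓ S' n = ⊥ := by
          have hle : D' ⊓ S' n ≤ D' ⊓ ⨆ k, S' k :=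
            inf_le_inf_left D' (le_iSup S' n)
          exact le_bot_iff.mp (hle.trans (le_of_eq hcompl.symm.inf_eq_bot))
        rw [this, Submodule.map_bot]
      have : d * e n ∈ D ⊓ T n := ⟨h1, h2⟩
      rwa [hDT, Submodule.mem_bot] at this
    · have : (⨆ n, Submodule.span R {e n}) ⊔ D = C := by
        have h1 : (⨆ n, Submodule.span R {e n}) = ⨆ n, T n :=
          iSup_congr fun n => hespan n
        rw [h1, hT, hD, ← Submodule.map_iSup, ← Submodule.map_sup,
          hcompl.sup_eq_top, Submodule.map_subtype_top]
      exact le_of_eq this.symm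
end
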